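/- arXiv:0708.0824 — 4 statements merged into one kernel-verified Lean document; each statement's English description precedes it below -/
import Mathlib

section
/- Let (X,d) be an L-linearly connected, N-doubling, complete metric space, let r > 0, and let 𝒩 be a maximal r-separated subset of X. Then there exists a collection of compact connected sets {V_x}_{x ∈ 𝒩} such that: (1) if x, y ∈ 𝒩 and d(x,y) ≤ 2r then y ∈ V_x; (2) diam(V_x) ≤ 5Lr for all x ∈ 𝒩; and (3) there is δ = δ(L,N) > 0 such that for all x, y ∈ 𝒩, if V_x ∩ V_y = ∅ then d(V_x, V_y) > δr. -/
open Metric Set Filter Topology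

/-- A metric space is `N`-doubling if every ball can be covered by at most `N`
balls of half the radius. -/
def Doubling (X : Type*) [MetricSpace X] (N : ℕ) : Prop :=
  ∀ (x : X) (r : ℝ), ∃ t : Finset X, t.card ≤ N ∧
    ball x r ⊆ ⋃ y ∈ t, ball y (r / 2)

/-- A set `S` is `r`-separated if distinct points of `S` are at distance at least `r`. -/
def IsSep {X : Type*} [MetricSpace X] (r : ℝ) (S : Set X) : Prop :=
  S.Pairwise (fun x y => r ≤ dist x y)

/-- `X` is `L`-linearly connected: any two points lie in a compact connected set of
diameter at most `L` times their distance. -/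
def LinearlyConnected (X : Type*) [MetricSpace X] (L : ℝ) : Prop :=
  ∀ x y : X, ∃ J : Set X, IsCompact J ∧ IsConnected J ∧ x ∈ J ∧ y ∈ J ∧
    diam J ≤ L * dist x y

/-- `f` parametrizes an arc: continuous and injective on `[0,1]`. -/
def IsArcParam {X : Type*} [MetricSpace X] (f : ℝ → X) : Prop :=
  ContinuousOn f (Icc 0 1) ∧ InjOn f (Icc 0 1)

/-- The arc parametrized by `g` `ε`-follows the arc parametrized by `f`: there is a
(coarse, not necessarily continuous) reparametrization `p` sending endpoints to
endpoints such that each subarc `g '' uIcc s t` lies in the `ε`-neighborhood of the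
corresponding subarc `f '' uIcc (p s) (p t)`. -/
def Follows {X : Type*} [MetricSpace X] (ε : ℝ) (g f : ℝ → X) : Prop :=
  ∃ p : ℝ → ℝ, MapsTo p (Icc 0 1) (Icc 0 1) ∧ p 0 = 0 ∧ p 1 = 1 ∧
    ∀ s ∈ Icc (0:ℝ) 1, ∀ t ∈ Icc (0:ℝ) 1,
      g '' uIcc s t ⊆ thickening ε (f '' uIcc (p s) (p t))

/-- Infimal distance between two subsets of a metric space. -/
noncomputable def SetDist {X : Type*} [MetricSpace X] (U V : Set X) : ℝ :=
  sInf (Set.image2 dist U V)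

/-!
Well-order the net and build the pieces one after another. The piece of `x` starts as a union of
continua joining `x` to its net neighbours within `2r`; it lies in the ball of radius `2Lr`
about `x`. While it is disjoint from, yet within `ε` of, an earlier piece, attach a continuum of
diameter at most `Lε` bridging the gap. Each bridge makes the piece meet one more earlier piece,
and only earlier pieces centred within `5Lr` of `x` can be met; by doubling there are at most
`M = M(L, N)` of these. So at most `M` bridges are attached, the piece stays in the ball of
radius `2Lr + MLε`, and with `ε ≈ r / M` disjoint pieces end up more than `ε` apart.
-/

namespace WellFounded

variable {α β : Type*} {s : α → α → Prop}

noncomputable def fixImage (hs : WellFounded s) (F : α → Set β → β) : α → β :=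
  hs.fix fun x V => F x (range fun y : {y // s y x} => V y y.2)

theorem fixImage_eq (hs : WellFounded s) (F : α → Set β → β) (x : α) :
    hs.fixImage F x = F x (hs.fixImage F '' {y | s y x}) := by
  rw [fixImage, hs.fix_eq]
  congr 1
  ext b
  simp

end WellFounded

section Continua

variable {X : Type*} [MetricSpace X] {L : ℝ}

theorem LinearlyConnected.exists_subset_closedBall (hLC : LinearlyConnected X L) (p q : X) :
    ∃ J, IsCompact J ∧ IsConnected J ∧ p ∈ J ∧ q ∈ J ∧ J ⊆ closedBall p (L * dist p q) := by
  obtain ⟨J, hJc, hJconn, hp, hq, hdiam⟩ := hLC p q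
  exact ⟨J, hJc, hJconn, hp, hq, fun w hw =>
    (dist_le_diam_of_mem hJc.isBounded hw hp).trans hdiam⟩

theorem LinearlyConnected.exists_continuum_superset (hLC : LinearlyConnected X L) (hL : 0 ≤ L)
    {c : X} {R : ℝ} (hR : 0 ≤ R) {A : Set X} (hA : A.Finite) (hAR : A ⊆ closedBall c R) :
    ∃ K, IsCompact K ∧ IsConnected K ∧ insert c A ⊆ K ∧ K ⊆ closedBall c (L * R) := by
  induction A, hA using Set.Finite.induction_on with
  | empty =>
    exact ⟨{c}, isCompact_singleton, isConnected_singleton, by simp,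
      by simpa using mul_nonneg hL hR⟩
  | @insert a A _ _ ih =>
    obtain ⟨K, hKc, hKconn, hAK, hKR⟩ := ih ((subset_insert a A).trans hAR)
    obtain ⟨J, hJc, hJconn, hcJ, haJ, hJR⟩ := hLC.exists_subset_closedBall c a
    have hca : dist c a ≤ R := by rw [dist_comm]; exact hAR (mem_insert a A)
    refine ⟨K ∪ J, hKc.union hJc, hKconn.union ⟨c, hAK (mem_insert c A), hcJ⟩ hJconn, ?_,
      union_subset hKR (hJR.trans (closedBall_subset_closedBall
        (mul_le_mul_of_nonneg_left hca hL)))⟩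
    rw [insert_comm]
    exact insert_subset (Or.inr haJ) (hAK.trans subset_union_left)

theorem LinearlyConnected.exists_superset_bridge (hLC : LinearlyConnected X L) {S : Set X}
    (hSc : IsCompact S) (hSconn : IsConnected S) {x p : X} {R : ℝ} (hSR : S ⊆ closedBall x R)
    (hp : p ∈ S) (q : X) :
    ∃ S', S ⊆ S' ∧ q ∈ S' ∧ IsCompact S' ∧ IsConnected S' ∧
      S' ⊆ closedBall x (R + L * dist p q) := by
  obtain ⟨J, hJc, hJconn, hpJ, hqJ, hJR⟩ := hLC.exists_subset_closedBall p q
  have hLpq : 0 ≤ L * dist p q := by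
    simpa using (dist_nonneg.trans (mem_closedBall.1 (hJR hqJ)))
  refine ⟨S ∪ J, subset_union_left, Or.inr hqJ, hSc.union hJc,
    hSconn.union ⟨p, hp, hpJ⟩ hJconn, union_subset ?_ ?_⟩
  · exact hSR.trans (closedBall_subset_closedBall (le_add_of_nonneg_right hLpq))
  · refine hJR.trans (closedBall_subset_closedBall' ?_)
    linarith [mem_closedBall.1 (hSR hp)]

end Continua

section MeetsOrFar

variable {X : Type*} [MetricSpace X]

def MeetsOrFar (ε : ℝ) (S P : Set X) : Prop :=
  ¬Disjoint S P ∨ ∀ p ∈ S, ∀ q ∈ P, ε < dist p q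

theorem MeetsOrFar.symm {ε : ℝ} {S P : Set X} (h : MeetsOrFar ε S P) : MeetsOrFar ε P S := by
  rcases h with h | h
  · exact Or.inl fun h' => h h'.symm
  · exact Or.inr fun q hq p hp => dist_comm p q ▸ h p hp q hq

theorem meetsOrFar_of_subset_closedBall {ε ρ : ℝ} {x : X} {T P : Set X}
    (hT : T ⊆ closedBall x ρ) (hP : Disjoint P (closedBall x (ρ + ε))) : MeetsOrFar ε T P := by
  refine Or.inr fun p hp q hq => ?_
  have hqx : ρ + ε < dist q x := not_le.1 fun h => hP.ne_of_mem hq (mem_closedBall.2 h) rfl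
  linarith [mem_closedBall.1 (hT hp), dist_triangle q p x, dist_comm p q]

theorem le_setDist {c : ℝ} {U V : Set X} (hU : U.Nonempty) (hV : V.Nonempty)
    (h : ∀ p ∈ U, ∀ q ∈ V, c ≤ dist p q) : c ≤ SetDist U V :=
  le_csInf (hU.image2 hV) (forall_mem_image2.2 h)

variable {L ε : ℝ}

theorem LinearlyConnected.exists_superset_meetsOrFar (hLC : LinearlyConnected X L) (hL : 0 ≤ L)
    (hε : 0 ≤ ε) {𝔓 : Set (Set X)} (h𝔓 : 𝔓.Finite) {x : X} (n : ℕ) {S : Set X} {R : ℝ}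
    (hSc : IsCompact S) (hSconn : IsConnected S) (hSR : S ⊆ closedBall x R)
    (hn : {P ∈ 𝔓 | Disjoint S P}.ncard ≤ n) :
    ∃ T, S ⊆ T ∧ IsCompact T ∧ IsConnected T ∧ T ⊆ closedBall x (R + n * (L * ε)) ∧
      ∀ P ∈ 𝔓, MeetsOrFar ε T P := by
  induction n generalizing S R with
  | zero =>
    have hnone : {P ∈ 𝔓 | Disjoint S P} = ∅ :=
      (ncard_eq_zero (h𝔓.subset (sep_subset _ _))).1 (by omega)
    refine ⟨S, subset_rfl, hSc, hSconn, by simpa using hSR, fun P hP => Or.inl fun hSP => ?_⟩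
    exact (hnone ▸ ⟨hP, hSP⟩ : P ∈ (∅ : Set (Set X)))
  | succ n ih =>
    by_cases hgood : ∀ P ∈ 𝔓, MeetsOrFar ε S P
    · refine ⟨S, subset_rfl, hSc, hSconn, hSR.trans (closedBall_subset_closedBall ?_), hgood⟩
      have : 0 ≤ ((n + 1 : ℕ) : ℝ) * (L * ε) := by positivity
      linarith
    obtain ⟨P, hP, hPS⟩ := not_forall₂.1 hgood
    simp only [MeetsOrFar, not_or, not_not, not_forall, not_lt] at hPS
    obtain ⟨hSP, p, hp, q, hq, hpq⟩ := hPS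
    obtain ⟨S', hSS', hqS', hS'c, hS'conn, hS'R⟩ :=
      hLC.exists_superset_bridge hSc hSconn hSR hp q
    have hfewer : {Q ∈ 𝔓 | Disjoint S' Q}.ncard ≤ n := by
      have hss : {Q ∈ 𝔓 | Disjoint S' Q} ⊂ {Q ∈ 𝔓 | Disjoint S Q} :=
        ssubset_of_subset_not_subset (fun Q hQ => ⟨hQ.1, hQ.2.mono_left hSS'⟩)
          fun h => (h ⟨hP, hSP⟩).2.ne_of_mem hqS' hq rfl
      have := ncard_lt_ncard hss (h𝔓.subset (sep_subset _ _))
      omega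
    have hS'R' : S' ⊆ closedBall x (R + L * ε) :=
      hS'R.trans (closedBall_subset_closedBall (by gcongr))
    obtain ⟨T, hS'T, hT⟩ := ih hS'c hS'conn hS'R' hfewer
    refine ⟨T, hSS'.trans hS'T, hT.1, hT.2.1, hT.2.2.1.trans_eq ?_, hT.2.2.2⟩
    push_cast
    ring_nf

end MeetsOrFar

section Doubling

variable {X : Type*} [MetricSpace X] {N : ℕ}

theorem Doubling.exists_finset_cover_pow (hN : Doubling X N) (k : ℕ) (x : X) (R : ℝ) :
    ∃ t : Finset X, t.card ≤ N ^ k ∧ ball x R ⊆ ⋃ y ∈ t, ball y (R / 2 ^ k) := by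
  classical
  induction k with
  | zero => exact ⟨{x}, by simp, by simp⟩
  | succ k ih =>
    obtain ⟨t, htN, hcover⟩ := ih
    choose u huN hucover using fun y : X => hN y (R / 2 ^ k)
    refine ⟨t.biUnion u, ?_, fun w hw => ?_⟩
    · calc (t.biUnion u).card ≤ ∑ y ∈ t, (u y).card := Finset.card_biUnion_le
        _ ≤ t.card * N := Finset.sum_le_card_nsmul _ _ _ fun y _ => huN y
        _ ≤ N ^ (k + 1) := by rw [pow_succ]; gcongr
    · obtain ⟨y, hy, hwy⟩ := mem_iUnion₂.1 (hcover hw)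
      obtain ⟨z, hz, hwz⟩ := mem_iUnion₂.1 (hucover y hwy)
      refine mem_iUnion₂.2 ⟨z, Finset.mem_biUnion.2 ⟨y, hy, hz⟩, ?_⟩
      rwa [pow_succ, ← div_div]

theorem IsSep.ncard_inter_closedBall_le {r : ℝ} {S : Set X} (hS : IsSep r S) (hr : 0 < r)
    (hN : Doubling X N) (c : X) {R : ℝ} {k : ℕ} (hk : 2 * (R + r) ≤ r * 2 ^ k) :
    (S ∩ closedBall c R).Finite ∧ (S ∩ closedBall c R).ncard ≤ N ^ k := by
  obtain ⟨t, htN, hcover⟩ := hN.exists_finset_cover_pow k c (R + r)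
  set ρ := (R + r) / 2 ^ k
  have hρ : 2 * ρ ≤ r := by
    rw [mul_div_assoc', div_le_iff₀ (by positivity)]
    exact hk
  have hnear : ∀ p ∈ S ∩ closedBall c R, ∃ y ∈ t, dist p y < ρ := by
    intro p hp
    have hpc : p ∈ ball c (R + r) := mem_ball.2 (by linarith [mem_closedBall.1 hp.2])
    simpa using hcover hpc
  have hsmall : ∀ y : X, {p ∈ S | dist p y < ρ}.Subsingleton := by
    intro y p hp q hq
    by_contra hpq
    have := dist_triangle_right p q y
    linarith [hS hp.1 hq.1 hpq, hp.2, hq.2]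
  have hfin : (S ∩ closedBall c R).Finite :=
    (t.finite_toSet.biUnion fun y _ => (hsmall y).finite).subset fun p hp => by
      obtain ⟨y, hy, hpy⟩ := hnear p hp
      exact mem_iUnion₂.2 ⟨y, hy, hp.1, hpy⟩
  refine ⟨hfin, ?_⟩
  rw [ncard_eq_toFinset_card _ hfin]
  refine (Finset.card_le_card_of_forall_subsingleton (fun p y => dist p y < ρ)
    (by simpa using hnear) fun y _ => (hsmall y).anti ?_).trans htN
  intro p hp
  simp only [Finite.mem_toFinset] at hp
  exact ⟨hp.1.1, hp.2⟩

theorem IsSep.finite_inter_closedBall {r : ℝ} {S : Set X} (hS : IsSep r S) (hr : 0 < r)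
    (hN : Doubling X N) (c : X) (R : ℝ) : (S ∩ closedBall c R).Finite := by
  obtain ⟨k, hk⟩ := pow_unbounded_of_one_lt (2 * (R + r) / r) one_lt_two
  exact (hS.ncard_inter_closedBall_le hr hN c (k := k)
    (by rw [div_lt_iff₀ hr] at hk; linarith)).1

end Doubling

section NetPieces

variable {X : Type*} [MetricSpace X] {L r ρ ε : ℝ} {𝒩 : Set X}

structure IsNetPiece (r ρ ε : ℝ) (𝒩 : Set X) (𝔓 : Set (Set X)) (x : X) (T : Set X) : Prop where
  isCompact : IsCompact T
  isConnected : IsConnected T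
  subset_closedBall : T ⊆ closedBall x ρ
  inter_closedBall_subset : 𝒩 ∩ closedBall x (2 * r) ⊆ T
  meetsOrFar : ∀ P ∈ 𝔓, MeetsOrFar ε T P

theorem LinearlyConnected.exists_isNetPiece (hLC : LinearlyConnected X L) (hL : 0 ≤ L)
    (hr : 0 ≤ r) (hε : 0 ≤ ε) {M : ℕ} (hρ : L * (2 * r) + M * (L * ε) ≤ ρ) {x : X}
    (hnbr : (𝒩 ∩ closedBall x (2 * r)).Finite) {𝔓 : Set (Set X)}
    (hfin : {P ∈ 𝔓 | ¬Disjoint P (closedBall x (ρ + ε))}.Finite)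
    (hcard : {P ∈ 𝔓 | ¬Disjoint P (closedBall x (ρ + ε))}.ncard ≤ M) :
    ∃ T, IsNetPiece r ρ ε 𝒩 𝔓 x T := by
  obtain ⟨K, hKc, hKconn, hK, hKR⟩ :=
    hLC.exists_continuum_superset hL (by positivity) hnbr inter_subset_right
  obtain ⟨T, hKT, hTc, hTconn, hTR, hTnear⟩ := hLC.exists_superset_meetsOrFar hL hε hfin M
    hKc hKconn hKR ((ncard_le_ncard (sep_subset _ _) hfin).trans hcard)
  have hTρ : T ⊆ closedBall x ρ := hTR.trans (closedBall_subset_closedBall hρ)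
  refine ⟨T, ⟨hTc, hTconn, hTρ, (subset_insert _ _).trans (hK.trans hKT), fun P hP => ?_⟩⟩
  by_cases hPx : Disjoint P (closedBall x (ρ + ε))
  · exact meetsOrFar_of_subset_closedBall hTρ hPx
  · exact hTnear P ⟨hP, hPx⟩

open Classical in
/-- The paper's `V_x`, chosen along the well-order `s`; it is `∅` off the net. -/
noncomputable def netPiece (s : X → X → Prop) [IsWellOrder X s] (r ρ ε : ℝ) (𝒩 : Set X) :
    X → Set X :=
  (IsWellFounded.wf : WellFounded s).fixImage fun x 𝔓 =>
    if h : x ∈ 𝒩 ∧ ∃ T, IsNetPiece r ρ ε 𝒩 𝔓 x T then h.2.choose else ∅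

variable {s : X → X → Prop} [IsWellOrder X s]

theorem netPiece_of_notMem {x : X} (hx : x ∉ 𝒩) : netPiece s r ρ ε 𝒩 x = ∅ := by
  rw [netPiece, WellFounded.fixImage_eq, dif_neg fun h => hx h.1]

theorem isNetPiece_netPiece_of_exists {x : X}
    (h : x ∈ 𝒩 ∧ ∃ T, IsNetPiece r ρ ε 𝒩 (netPiece s r ρ ε 𝒩 '' {y | s y x}) x T) :
    IsNetPiece r ρ ε 𝒩 (netPiece s r ρ ε 𝒩 '' {y | s y x}) x (netPiece s r ρ ε 𝒩 x) := by
  convert h.2.choose_spec using 1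
  conv_lhs => rw [netPiece, WellFounded.fixImage_eq]
  exact dif_pos h

theorem isNetPiece_netPiece (hLC : LinearlyConnected X L) (hL : 0 ≤ L) (hr : 0 ≤ r)
    (hε : 0 ≤ ε) {M : ℕ} (hρ : L * (2 * r) + M * (L * ε) ≤ ρ)
    (hfin : ∀ x R, (𝒩 ∩ closedBall x R).Finite)
    (hcard : ∀ x, (𝒩 ∩ closedBall x (2 * ρ + ε)).ncard ≤ M) {x : X} (hx : x ∈ 𝒩) :
    IsNetPiece r ρ ε 𝒩 (netPiece s r ρ ε 𝒩 '' {y | s y x}) x (netPiece s r ρ ε 𝒩 x) := by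
  induction x using IsWellFounded.induction s with
  | _ x ih =>
  set V := netPiece s r ρ ε 𝒩
  have hnear : {P ∈ V '' {y | s y x} | ¬Disjoint P (closedBall x (ρ + ε))} ⊆
      V '' (𝒩 ∩ closedBall x (2 * ρ + ε)) := by
    rintro _ ⟨⟨y, hyx, rfl⟩, hyP⟩
    obtain ⟨w, hwy, hwx⟩ := not_disjoint_iff.1 hyP
    have hy : y ∈ 𝒩 := by
      by_contra hy
      rw [show V y = ∅ from netPiece_of_notMem hy] at hwy
      exact hwy
    have hwy' : dist w y ≤ ρ := (ih y hyx hy).subset_closedBall hwy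
    refine ⟨y, ⟨hy, mem_closedBall.2 ?_⟩, rfl⟩
    linarith [mem_closedBall.1 hwx, dist_triangle_left y x w]
  have hfin_near := (hfin x (2 * ρ + ε)).image V
  obtain ⟨T, hT⟩ := hLC.exists_isNetPiece hL hr hε hρ (hfin x _) (hfin_near.subset hnear)
    ((ncard_le_ncard hnear hfin_near).trans ((ncard_image_le (hfin x _)).trans (hcard x)))
  exact isNetPiece_netPiece_of_exists ⟨hx, T, hT⟩

theorem meetsOrFar_netPiece
    (h : ∀ x ∈ 𝒩,
      IsNetPiece r ρ ε 𝒩 (netPiece s r ρ ε 𝒩 '' {y | s y x}) x (netPiece s r ρ ε 𝒩 x))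
    {x y : X} (hx : x ∈ 𝒩) (hy : y ∈ 𝒩) (hxy : x ≠ y) :
    MeetsOrFar ε (netPiece s r ρ ε 𝒩 x) (netPiece s r ρ ε 𝒩 y) := by
  rcases trichotomous_of s x y with hsxy | rfl | hsyx
  · exact ((h y hy).meetsOrFar _ ⟨x, hsxy, rfl⟩).symm
  · exact absurd rfl hxy
  · exact (h x hx).meetsOrFar _ ⟨y, hsyx, rfl⟩

end NetPieces

theorem LinearlyConnected.exists_net_pieces {X : Type*} [MetricSpace X] {L r ρ ε : ℝ}
    {𝒩 : Set X} (hLC : LinearlyConnected X L) (hL : 0 ≤ L) (hr : 0 ≤ r) (hε : 0 ≤ ε) {M : ℕ}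
    (hρ : L * (2 * r) + M * (L * ε) ≤ ρ) (hfin : ∀ x R, (𝒩 ∩ closedBall x R).Finite)
    (hcard : ∀ x, (𝒩 ∩ closedBall x (2 * ρ + ε)).ncard ≤ M) :
    ∃ V : X → Set X,
      (∀ x ∈ 𝒩, IsCompact (V x) ∧ IsConnected (V x) ∧ V x ⊆ closedBall x ρ) ∧
      (∀ x ∈ 𝒩, ∀ y ∈ 𝒩, dist x y ≤ 2 * r → y ∈ V x) ∧
      (∀ x ∈ 𝒩, ∀ y ∈ 𝒩, V x ∩ V y = ∅ → ε ≤ SetDist (V x) (V y)) := by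
  have hV x (hx : x ∈ 𝒩) :=
    isNetPiece_netPiece (s := WellOrderingRel) hLC hL hr hε hρ hfin hcard hx
  set V := netPiece WellOrderingRel r ρ ε 𝒩
  have hnbr {x y} (hx : x ∈ 𝒩) (hy : y ∈ 𝒩) (hxy : dist x y ≤ 2 * r) : y ∈ V x :=
    (hV x hx).inter_closedBall_subset ⟨hy, mem_closedBall'.2 hxy⟩
  have hself {x} (hx : x ∈ 𝒩) : x ∈ V x := hnbr hx hx (by simpa using hr)
  refine ⟨V, fun x hx => ⟨(hV x hx).isCompact, (hV x hx).isConnected,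
    (hV x hx).subset_closedBall⟩, fun x hx y hy => hnbr hx hy, fun x hx y hy hxy => ?_⟩
  have hne : x ≠ y := by
    rintro rfl
    rw [inter_self] at hxy
    exact (hxy ▸ hself hx : x ∈ (∅ : Set X))
  rcases meetsOrFar_netPiece hV hx hy hne with hmeet | hfar
  · exact absurd (disjoint_iff_inter_eq_empty.2 hxy) hmeet
  · exact le_setDist ⟨x, hself hx⟩ ⟨y, hself hy⟩ fun p hp q hq => (hfar p hp q hq).le

theorem stmt7_general {X : Type*} [MetricSpace X] {N : ℕ}
    (hN : Doubling X N) {L : ℝ} (hL : 1 ≤ L) (hLC : LinearlyConnected X L) :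
    ∃ δ : ℝ, 0 < δ ∧ ∀ r : ℝ, 0 < r → ∀ 𝒩 : Set X, IsSep r 𝒩 →
      (∀ z : X, ∃ x ∈ 𝒩, dist z x < r) →
      ∃ V : X → Set X,
        (∀ x ∈ 𝒩, IsCompact (V x) ∧ IsConnected (V x) ∧ diam (V x) ≤ 5 * L * r) ∧
        (∀ x ∈ 𝒩, ∀ y ∈ 𝒩, dist x y ≤ 2 * r → y ∈ V x) ∧
        (∀ x ∈ 𝒩, ∀ y ∈ 𝒩, V x ∩ V y = ∅ → δ * r < SetDist (V x) (V y)) := by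
  -- With `ρ = 9Lr/4`, `2 (2ρ + ε + r) ≤ 12 L r < 2 ^ k r`: the doubling count `M` applies.
  obtain ⟨k, hk⟩ := pow_unbounded_of_one_lt (12 * L) one_lt_two
  set M := N ^ k
  refine ⟨1 / (8 * (M + 1)), by positivity, fun r hr 𝒩 hsep _ => ?_⟩
  set ε := r / (4 * (M + 1)) with hεdef
  have hε : 0 < ε := by positivity
  have hMε : M * ε ≤ r / 4 := by
    rw [hεdef, mul_div_assoc', div_le_div_iff₀ (by positivity) (by norm_num)]
    nlinarith
  have hεr : ε ≤ r / 4 := by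
    rw [hεdef, div_le_div_iff₀ (by positivity) (by norm_num)]
    nlinarith
  obtain ⟨V, hV, hnbr, hsepV⟩ := hLC.exists_net_pieces (ρ := 9 / 4 * L * r) (by linarith) hr.le
    hε.le (by nlinarith) (hsep.finite_inter_closedBall hr hN)
    fun x => (hsep.ncard_inter_closedBall_le hr hN x (k := k) (by nlinarith)).2
  refine ⟨V, fun x hx => ⟨(hV x hx).1, (hV x hx).2.1, ?_⟩, hnbr, fun x hx y hy hxy => ?_⟩
  · calc diam (V x) ≤ diam (closedBall x (9 / 4 * L * r)) :=
          diam_mono (hV x hx).2.2 isBounded_closedBall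
      _ ≤ 2 * (9 / 4 * L * r) := diam_closedBall (by positivity)
      _ ≤ 5 * L * r := by nlinarith
  · calc 1 / (8 * (M + 1)) * r < ε := by rw [hεdef]; field_simp; nlinarith
      _ ≤ SetDist (V x) (V y) := hsepV x hx y hy hxy

/-- Construction of the connected "net pieces" `V_x`: there is `δ = δ(L,N) > 0` such
that for every `r > 0` and maximal `r`-separated set `𝒩` there are compact connected
sets `V x` satisfying (1) `d(x,y) ≤ 2r → y ∈ V x`, (2) `diam (V x) ≤ 5 L r`, and
(3) disjoint pieces are at distance `> δ r`. -/
theorem stmt7 {X : Type*} [MetricSpace X] [CompleteSpace X] {N : ℕ}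
    (hN : Doubling X N) {L : ℝ} (hL : 1 ≤ L) (hLC : LinearlyConnected X L) :
    ∃ δ : ℝ, 0 < δ ∧ ∀ r : ℝ, 0 < r → ∀ 𝒩 : Set X, IsSep r 𝒩 →
      (∀ z : X, ∃ x ∈ 𝒩, dist z x < r) →
      ∃ V : X → Set X,
        (∀ x ∈ 𝒩, IsCompact (V x) ∧ IsConnected (V x) ∧ diam (V x) ≤ 5 * L * r) ∧
        (∀ x ∈ 𝒩, ∀ y ∈ 𝒩, dist x y ≤ 2 * r → y ∈ V x) ∧
        (∀ x ∈ 𝒩, ∀ y ∈ 𝒩, V x ∩ V y = ∅ → δ * r < SetDist (V x) (V y)) :=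
  stmt7_general hN hL hLC
end

section
/- A compact connected metric space J with at least two points a, b is an arc with endpoints a and b if every point x ∈ J \ {a, b} is a cut point of J (i.e., J \ {x} is disconnected). -/
open Metric Set Filter Topology

/-!
For `x ∉ {a, b}` split `J \ {x}` into disjoint open sets `U x ∋ a` and `V x`. Adding `x` back
to either side gives a connected set. A nondegenerate continuum has a non-cut point other than
any given point (a minimal set `insert v (V v)`, found by Zorn's lemma and compactness, would
otherwise contain a smaller one); applied to the continuum `insert x (V x)` this non-cut point
can only be `b`, so `b ∈ V x`. Connectedness of the sides then shows that `x < y ↔ y ∈ V x`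
is a linear order with open rays `Iio x = U x` and `Ioi x = V x`, and by compactness the
topology is the order topology. Finally a compact connected separable linear order is order
isomorphic to `[0, 1]`: match a countable order-dense subset with `ℚ ∩ (0, 1)` by Cantor's
back-and-forth argument and extend by suprema.
-/

structure IsSplitAt {X : Type*} [TopologicalSpace X] (x : X) (U V : Set X) : Prop where
  isOpen_left : IsOpen U
  isOpen_right : IsOpen V
  disjoint : Disjoint U V
  union_eq : U ∪ V = {x}ᶜ

namespace IsSplitAt

variable {X : Type*} [TopologicalSpace X] {x y p : X} {U V U' V' : Set X}

theorem symm (h : IsSplitAt x U V) : IsSplitAt x V U :=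
  ⟨h.isOpen_right, h.isOpen_left, h.disjoint.symm, union_comm U V ▸ h.union_eq⟩

theorem compl_left (h : IsSplitAt x U V) : Uᶜ = insert x V := by
  ext z
  have hz : z ∈ U ∨ z ∈ V ↔ z ≠ x := by simpa using Set.ext_iff.mp h.union_eq z
  have := h.disjoint.notMem_of_mem_left (a := z)
  simp only [mem_compl_iff, mem_insert_iff]
  tauto

theorem notMem_right_of_mem_left (h : IsSplitAt x U V) (hp : p ∈ U) : p ∉ insert x V := by
  rw [← h.compl_left]
  exact notMem_compl_iff.mpr hp

theorem ne_of_mem_right (h : IsSplitAt x U V) (hp : p ∈ V) : p ≠ x :=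
  fun hpx => h.symm.notMem_right_of_mem_left hp (hpx ▸ mem_insert p U)

theorem mem_left_or_mem_right (h : IsSplitAt x U V) (hp : p ≠ x) : p ∈ U ∨ p ∈ V :=
  (h.union_eq ▸ hp : p ∈ U ∪ V)

theorem isClosed_insert_right (h : IsSplitAt x U V) : IsClosed (insert x V) :=
  h.compl_left ▸ h.isOpen_left.isClosed_compl

theorem empty_left [T1Space X] (x : X) : IsSplitAt x ∅ {x}ᶜ :=
  ⟨isOpen_empty, isOpen_compl_singleton, empty_disjoint _, empty_union _⟩

theorem exists_of_not_isPreconnected [T1Space X] (hx : ¬IsPreconnected ({x}ᶜ : Set X))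
    (hp : p ≠ x) : ∃ U V, IsSplitAt x U V ∧ p ∈ U ∧ V.Nonempty := by
  simp only [IsPreconnected, not_forall, not_nonempty_iff_eq_empty] at hx
  obtain ⟨u, v, hu, hv, hcover, ⟨q, hqu⟩, ⟨r, hrv⟩, huv⟩ := hx
  have hsplit : IsSplitAt x ({x}ᶜ ∩ u) ({x}ᶜ ∩ v) :=
    ⟨isOpen_compl_singleton.inter hu, isOpen_compl_singleton.inter hv,
      disjoint_iff_inter_eq_empty.mpr (by rw [← huv]; ext; simp; tauto),
      by rw [← inter_union_distrib_left, inter_eq_left.mpr hcover]⟩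
  rcases hsplit.mem_left_or_mem_right hp with hpu | hpv
  · exact ⟨_, _, hsplit, hpu, r, hrv⟩
  · exact ⟨_, _, hsplit.symm, hpv, q, hqu⟩

theorem subset_right_of_isPreconnected (h : IsSplitAt x U V) {s : Set X}
    (hs : IsPreconnected s) (hxs : x ∉ s) (hsV : (s ∩ V).Nonempty) : s ⊆ V :=
  hs.subset_left_of_subset_union h.isOpen_right h.isOpen_left h.disjoint.symm
    (by rwa [union_comm, h.union_eq, subset_compl_singleton_iff]) hsV

variable [PreconnectedSpace X]

/-- If `insert x V` splits into two closed pieces, the piece avoiding `x` is clopen in `X`. -/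
theorem isPreconnected_insert_right (h : IsSplitAt x U V) : IsPreconnected (insert x V) := by
  rw [isPreconnected_iff_subset_of_fully_disjoint_closed h.isClosed_insert_right]
  intro P Q hP hQ hcover hPQ
  wlog hxP : x ∈ P generalizing P Q
  · exact (this Q P hQ hP (union_comm P Q ▸ hcover) hPQ.symm
      ((hcover (mem_insert x V)).resolve_left hxP)).symm
  have hclopen : IsClopen (insert x V ∩ Q) := by
    have hVQ : insert x V ∩ Q = V ∩ Pᶜ := by
      ext z
      have := @hcover z
      have := hPQ.notMem_of_mem_left (a := z)
      by_cases hz : z = x <;> simp_all; tauto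
    exact ⟨h.isClosed_insert_right.inter hQ, hVQ ▸ h.isOpen_right.inter hP.isOpen_compl⟩
  rcases isClopen_iff.mp hclopen with hempty | huniv
  · left
    intro z hz
    exact (hcover hz).resolve_right fun hzQ => (hempty ▸ ⟨hz, hzQ⟩ : z ∈ (∅ : Set X))
  · exact absurd (huniv ▸ mem_univ x : x ∈ insert x V ∩ Q).2 (hPQ.notMem_of_mem_left hxP)

theorem mem_left_of_mem_right (hx : IsSplitAt x U V) (hy : IsSplitAt y U' V')
    (hpU : p ∈ U) (hpU' : p ∈ U') (hyV : y ∈ V) : x ∈ U' :=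
  hy.symm.subset_right_of_isPreconnected hx.symm.isPreconnected_insert_right
    (hx.symm.notMem_right_of_mem_left hyV) ⟨p, mem_insert_of_mem x hpU, hpU'⟩ (mem_insert x U)

theorem insert_right_subset (hx : IsSplitAt x U V) (hy : IsSplitAt y U' V') (hxU' : x ∈ U')
    (hyV : y ∈ V) : insert y V' ⊆ V :=
  hx.subset_right_of_isPreconnected hy.isPreconnected_insert_right
    (hy.notMem_right_of_mem_left hxU') ⟨y, mem_insert y V', hyV⟩

end IsSplitAt

section NonCutPoints

variable {X : Type*} [TopologicalSpace X] [CompactSpace X] [T1Space X] [ConnectedSpace X]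

/-- Otherwise split `X \ {v}` for every `v ≠ x`, with `x` on the left. The closed sets
`insert v (V v)` shrink as `v` moves into `V v`, so none of them is minimal, contradicting
Zorn's lemma and compactness. -/
theorem exists_ne_isPreconnected_compl_singleton {x y : X} (hyx : y ≠ x) :
    ∃ v ≠ x, IsPreconnected ({v}ᶜ : Set X) := by
  by_contra! hcut
  have hsplit (v : X) : ∃ U V : Set X, v ≠ x → IsSplitAt v U V ∧ x ∈ U ∧ V.Nonempty := by
    by_cases hvx : v = x
    · exact ⟨∅, ∅, fun h => (h hvx).elim⟩
    · obtain ⟨U, V, h⟩ := IsSplitAt.exists_of_not_isPreconnected (hcut v hvx) (Ne.symm hvx)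
      exact ⟨U, V, fun _ => h⟩
  choose U V hUV using hsplit
  have hdescend {v : X} (hv : v ≠ x) {w : X} (hw : w ∈ V v) :
      w ≠ x ∧ insert w (V w) ⊆ V v := by
    obtain ⟨hsv, hxv, -⟩ := hUV v hv
    have hwx : w ≠ x := fun h => hsv.notMem_right_of_mem_left hxv (h ▸ mem_insert_of_mem v hw)
    obtain ⟨hsw, hxw, -⟩ := hUV w hwx
    exact ⟨hwx, hsv.insert_right_subset hsw (hsv.mem_left_of_mem_right hsw hxv hxw hw) hw⟩
  have hx_notMem {v : X} (hv : v ≠ x) : x ∉ insert v (V v) :=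
    (hUV v hv).1.notMem_right_of_mem_left (hUV v hv).2.1
  let S : Set (Set X) := {s | ∃ v ≠ x, s = insert v (V v)}
  have hchain : ∀ c ⊆ S, IsChain (· ⊆ ·) c → c.Nonempty → ∃ lb ∈ S, ∀ s ∈ c, lb ⊆ s := by
    rintro c hcS hc ⟨s₀, hs₀⟩
    have : Nonempty c := ⟨⟨s₀, hs₀⟩⟩
    have hclosed : ∀ s ∈ c, IsClosed s := fun s hs => by
      obtain ⟨v, hv, rfl⟩ := hcS hs
      exact (hUV v hv).1.isClosed_insert_right
    obtain ⟨w, hw⟩ := IsCompact.nonempty_sInter_of_directed_nonempty_isCompact_isClosed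
      (IsChain.directedOn (r := fun s t : Set X => s ⊇ t) hc.symm)
      (fun s hs => by obtain ⟨v, -, rfl⟩ := hcS hs; exact insert_nonempty _ _)
      (fun s hs => (hclosed s hs).isCompact) hclosed
    have hwx : w ≠ x := by
      obtain ⟨v, hv, rfl⟩ := hcS hs₀
      exact fun h => hx_notMem hv (h ▸ hw _ hs₀)
    refine ⟨insert w (V w), ⟨w, hwx, rfl⟩, fun s hs => ?_⟩
    obtain ⟨v, hv, rfl⟩ := hcS hs
    rcases hw _ hs with rfl | hwV
    · exact subset_rfl
    · exact (hdescend hv hwV).2.trans (subset_insert _ _)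
  obtain ⟨m, -, hm⟩ := zorn_superset_nonempty S hchain _ ⟨y, hyx, rfl⟩
  obtain ⟨v, hv, rfl⟩ := hm.prop
  obtain ⟨w, hw⟩ := (hUV v hv).2.2
  obtain ⟨hwx, hwv⟩ := hdescend hv hw
  have hvw : insert v (V v) ⊆ insert w (V w) := hm.2 ⟨w, hwx, rfl⟩ (hwv.trans (subset_insert _ _))
  exact (hUV v hv).1.ne_of_mem_right (hwv (hvw (mem_insert v (V v)))) rfl

theorem IsSplitAt.exists_mem_right_isPreconnected {x : X} {U V : Set X} (h : IsSplitAt x U V)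
    (hV : V.Nonempty) : ∃ v ∈ V, IsPreconnected ({v}ᶜ : Set X) := by
  set K := insert x V
  have : CompactSpace K := isCompact_iff_compactSpace.mp h.isClosed_insert_right.isCompact
  have : ConnectedSpace K :=
    isConnected_iff_connectedSpace.mp ⟨insert_nonempty x V, h.isPreconnected_insert_right⟩
  obtain ⟨w, hw⟩ := hV
  obtain ⟨⟨v, hvK⟩, hvx_sub, hv⟩ := exists_ne_isPreconnected_compl_singleton
    (x := ⟨x, mem_insert x V⟩) (y := ⟨w, mem_insert_of_mem x hw⟩)
    (Subtype.coe_ne_coe.mp (h.ne_of_mem_right hw))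
  have hvx : v ≠ x := fun e => hvx_sub (Subtype.ext e)
  have hvV : v ∈ V := hvK.resolve_left hvx
  refine ⟨v, hvV, ?_⟩
  have hKv : IsPreconnected (K \ {v}) := by
    convert hv.image _ continuous_subtype_val.continuousOn using 1
    ext z
    simp [K]
  have hcompl : ({v}ᶜ : Set X) = insert x U ∪ K \ {v} := by
    ext z
    have hzUV := h.mem_left_or_mem_right (p := z)
    have hzUV' := h.disjoint.notMem_of_mem_left (a := z)
    by_cases hz : z = v
    · subst hz; simp [K, hvV, hvx, h.disjoint.notMem_of_mem_right hvV]
    · simp [K, hz]; tauto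
  rw [hcompl]
  exact h.symm.isPreconnected_insert_right.union x (mem_insert x U) ⟨mem_insert x V, hvx.symm⟩ hKv

end NonCutPoints

/-- A compact topology finer than a Hausdorff one coincides with it. -/
theorem OrderTopology.of_isOpen_Ioi_Iio {X : Type*} [t : TopologicalSpace X] [LinearOrder X]
    [CompactSpace X] (hIoi : ∀ x : X, IsOpen (Ioi x)) (hIio : ∀ x : X, IsOpen (Iio x)) :
    OrderTopology X := by
  have : @OrderTopology X (Preorder.topology X) _ := @OrderTopology.mk X (Preorder.topology X) _ rfl
  have hle : t ≤ Preorder.topology X :=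
    le_generateFrom (by rintro _ ⟨x, rfl | rfl⟩; exacts [hIoi x, hIio x])
  refine ⟨le_antisymm hle fun s hs => ?_⟩
  have hc := @IsCompact.image X X t (Preorder.topology X) _ id hs.isClosed_compl.isCompact
    (continuous_id_of_le hle)
  rw [image_id] at hc
  exact (@isClosed_compl_iff X (Preorder.topology X) s).mp
    (@IsCompact.isClosed X (Preorder.topology X) (by infer_instance) _ hc)

structure OrientedSplitting (X : Type*) [TopologicalSpace X] (a b : X) where
  left : X → Set X
  right : X → Set X
  isSplitAt (x : X) : IsSplitAt x (left x) (right x)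
  mem_left (x : X) : x ≠ a → a ∈ left x
  mem_right (x : X) : x ≠ b → b ∈ right x

namespace OrientedSplitting

variable {X : Type*} [TopologicalSpace X] {a b : X}

/-- At a cut point `x`, the splitting with `a` on the left has a non-cut point on the right,
which can only be `b`. -/
theorem nonempty_of_not_isPreconnected [CompactSpace X] [T1Space X] [ConnectedSpace X]
    (hab : a ≠ b) (hcut : ∀ x : X, x ≠ a → x ≠ b → ¬IsPreconnected ({x}ᶜ : Set X)) :
    Nonempty (OrientedSplitting X a b) := by
  have (x : X) : ∃ U V : Set X, IsSplitAt x U V ∧ (x ≠ a → a ∈ U) ∧ (x ≠ b → b ∈ V) := by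
    by_cases hxa : x = a
    · subst hxa
      exact ⟨∅, {x}ᶜ, .empty_left x, fun h => (h rfl).elim, fun _ => hab.symm⟩
    by_cases hxb : x = b
    · subst hxb
      exact ⟨{x}ᶜ, ∅, (IsSplitAt.empty_left x).symm, fun _ => hab, fun h => (h rfl).elim⟩
    obtain ⟨U, V, h, haU, hV⟩ :=
      IsSplitAt.exists_of_not_isPreconnected (hcut x hxa hxb) (Ne.symm hxa)
    obtain ⟨v, hvV, hv⟩ := h.exists_mem_right_isPreconnected hV
    have hva : v ≠ a := fun hva => h.disjoint.notMem_of_mem_left haU (hva ▸ hvV)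
    obtain rfl : v = b := by_contra fun hvb => hcut v hva hvb hv
    exact ⟨U, V, h, fun _ => haU, fun _ => hvV⟩
  choose U V hsplit ha hb using this
  exact ⟨⟨U, V, hsplit, ha, hb⟩⟩

variable (S : OrientedSplitting X a b)

def symm : OrientedSplitting X b a :=
  ⟨S.right, S.left, fun x => (S.isSplitAt x).symm, S.mem_right, S.mem_left⟩

variable [PreconnectedSpace X] {x y : X}

theorem mem_left_of_mem_right (hy : y ∈ S.right x) : x ∈ S.left y := by
  have hyx := (S.isSplitAt x).ne_of_mem_right hy
  by_cases hxa : x = a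
  · exact hxa ▸ S.mem_left y (hxa ▸ hyx)
  have hya : y ≠ a := fun h =>
    (S.isSplitAt x).disjoint.notMem_of_mem_left (S.mem_left x hxa) (h ▸ hy)
  exact (S.isSplitAt x).mem_left_of_mem_right (S.isSplitAt y) (S.mem_left x hxa)
    (S.mem_left y hya) hy

theorem mem_right_of_mem_left (hy : y ∈ S.left x) : x ∈ S.right y :=
  S.symm.mem_left_of_mem_right hy

theorem right_subset_right (hy : y ∈ S.right x) : S.right y ⊆ S.right x :=
  ((S.isSplitAt x).insert_right_subset (S.isSplitAt y) (S.mem_left_of_mem_right hy) hy).trans'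
    (subset_insert y _)

noncomputable abbrev linearOrder : LinearOrder X :=
  @linearOrderOfSTO X (fun x y => y ∈ S.right x)
    { irrefl := fun x hx => (S.isSplitAt x).ne_of_mem_right hx rfl
      trans := fun _ _ _ hy hz => S.right_subset_right hy hz
      trichotomous := fun x y hxy hyx => by
        by_contra hne
        rcases (S.isSplitAt x).mem_left_or_mem_right (Ne.symm hne) with hy | hy
        exacts [hyx (S.mem_right_of_mem_left hy), hxy hy] }
    (Classical.decRel _)

theorem Iio_eq (y : X) : letI := S.linearOrder; Iio y = S.left y :=
  Set.ext fun _ => ⟨S.mem_left_of_mem_right, S.mem_right_of_mem_left⟩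

theorem orderTopology [CompactSpace X] : letI := S.linearOrder; OrderTopology X :=
  letI := S.linearOrder
  .of_isOpen_Ioi_Iio (fun x => (S.isSplitAt x).isOpen_right)
    (fun y => S.Iio_eq y ▸ (S.isSplitAt y).isOpen_left)

theorem isBot : letI := S.linearOrder; IsBot a := by
  let := S.linearOrder
  intro x
  rcases eq_or_ne x a with rfl | hxa
  · exact le_rfl
  · exact ((S.Iio_eq x).symm ▸ S.mem_left x hxa : a ∈ Iio x).le

theorem isTop : letI := S.linearOrder; IsTop b := by
  let := S.linearOrder
  intro x
  rcases eq_or_ne x b with rfl | hxb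
  · exact le_rfl
  · exact (show x < b from S.mem_right x hxb).le

end OrientedSplitting

section OrderArc

variable {X : Type*} [LinearOrder X]

/-- The witness is `x ↦ sup {φ e | e ∈ E, e < x}`. -/
theorem exists_strictMono_denseRange_Icc {E : Set X} (φ : E ≃o Ioo (0 : ℚ) 1)
    (hE : ∀ ⦃x y : X⦄, x < y → ∃ e ∈ E, e ∈ Ioo x y) :
    ∃ g : X → Icc (0 : ℝ) 1, StrictMono g ∧ DenseRange g := by
  let ψ : E → ℝ := fun e => ((φ e : ℚ) : ℝ)
  have hψ : StrictMono ψ := fun e e' h => by simpa [ψ] using φ.strictMono h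
  have hψ_pos (e : E) : 0 < ψ e := by simp only [ψ]; exact_mod_cast (φ e).2.1
  have hψ_lt_one (e : E) : ψ e < 1 := by simp only [ψ]; exact_mod_cast (φ e).2.2
  have hψ_symm (q : Ioo (0 : ℚ) 1) : ψ (φ.symm q) = q := by simp [ψ]
  let h : X → ℝ := fun x => sSup (ψ '' {e | (e : X) < x})
  have hbdd (x : X) : BddAbove (ψ '' {e | (e : X) < x}) :=
    ⟨1, by rintro _ ⟨e, -, rfl⟩; exact (hψ_lt_one e).le⟩
  have le_h {x : X} {e : E} (he : (e : X) < x) : ψ e ≤ h x := le_csSup (hbdd x) ⟨e, he, rfl⟩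
  have h_le {x : X} {e : E} (he : x ≤ e) : h x ≤ ψ e :=
    Real.sSup_le (by rintro _ ⟨e', he', rfl⟩; exact (hψ (he'.trans_le he)).le) (hψ_pos e).le
  have h_mem (x : X) : h x ∈ Icc (0 : ℝ) 1 :=
    ⟨Real.sSup_nonneg (by rintro _ ⟨e, -, rfl⟩; exact (hψ_pos e).le),
      Real.sSup_le (by rintro _ ⟨e, -, rfl⟩; exact (hψ_lt_one e).le) zero_le_one⟩
  refine ⟨fun x => ⟨h x, h_mem x⟩, fun x y hxy => ?_, dense_of_exists_between fun s t hst => ?_⟩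
  · obtain ⟨e₁, he₁, hxe₁, he₁y⟩ := hE hxy
    obtain ⟨e₂, he₂, he₁e₂, he₂y⟩ := hE he₁y
    show h x < h y
    calc h x ≤ ψ ⟨e₁, he₁⟩ := h_le hxe₁.le
      _ < ψ ⟨e₂, he₂⟩ := hψ he₁e₂
      _ ≤ h y := le_h he₂y
  · obtain ⟨q₁, hsq₁, hq₁t⟩ := exists_rat_btwn (show (s : ℝ) < t from hst)
    obtain ⟨q₂, hq₁q₂, hq₂t⟩ := exists_rat_btwn hq₁t
    have hq₁_pos : (0 : ℝ) < q₁ := s.2.1.trans_lt hsq₁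
    have hq₂_lt : (q₂ : ℝ) < 1 := hq₂t.trans_le t.2.2
    have hq₁ : q₁ ∈ Ioo (0 : ℚ) 1 := ⟨mod_cast hq₁_pos, mod_cast hq₁q₂.trans hq₂_lt⟩
    have hq₂ : q₂ ∈ Ioo (0 : ℚ) 1 := ⟨mod_cast hq₁_pos.trans hq₁q₂, mod_cast hq₂_lt⟩
    let e₁ := φ.symm ⟨q₁, hq₁⟩
    let e₂ := φ.symm ⟨q₂, hq₂⟩
    have he₁e₂ : e₁ < e₂ := φ.symm.strictMono (Subtype.mk_lt_mk.mpr (by exact_mod_cast hq₁q₂))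
    refine ⟨_, mem_range_self (e₂ : X), ?_, ?_⟩
    · show (s : ℝ) < h e₂
      exact hsq₁.trans_le ((hψ_symm _).symm.trans_le (le_h he₁e₂))
    · show h e₂ < t
      exact (h_le le_rfl).trans_lt ((hψ_symm _).trans_lt hq₂t)

variable [TopologicalSpace X] [OrderTopology X]

theorem exists_orderIso_Icc [CompactSpace X] [ConnectedSpace X] [TopologicalSpace.SeparableSpace X]
    [Nontrivial X] : Nonempty (X ≃o Icc (0 : ℝ) 1) := by
  have := denselyOrdered_of_preconnectedSpace (α := X)
  obtain ⟨E, hEc, hEd, hEbot, hEtop⟩ := exists_countable_dense_no_bot_top X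
  have hE : ∀ ⦃x y : X⦄, x < y → ∃ e ∈ E, e ∈ Ioo x y := fun _ _ h => hEd.exists_between h
  have : Countable E := hEc.to_subtype
  have : Nonempty E := hEd.nonempty.to_subtype
  have : DenselyOrdered E := ⟨fun _ _ h => let ⟨e, heE, he⟩ := hE h; ⟨⟨e, heE⟩, he⟩⟩
  have : NoMinOrder E := ⟨fun e => by
    obtain ⟨x, hx⟩ : ∃ x, x < (e : X) := by simpa [IsBot] using (hEbot e · e.2)
    obtain ⟨e', he', hxe', he'e⟩ := hE hx
    exact ⟨⟨e', he'⟩, he'e⟩⟩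
  have : NoMaxOrder E := ⟨fun e => by
    obtain ⟨x, hx⟩ : ∃ x, (e : X) < x := by simpa [IsTop] using (hEtop e · e.2)
    obtain ⟨e', he', he'e, hxe'⟩ := hE hx
    exact ⟨⟨e', he'⟩, he'e⟩⟩
  have : Nonempty (Ioo (0 : ℚ) 1) := (nonempty_Ioo.mpr zero_lt_one).to_subtype
  obtain ⟨φ⟩ := Order.iso_of_countable_dense E (Ioo (0 : ℚ) 1)
  obtain ⟨g, hg, hdense⟩ := exists_strictMono_denseRange_Icc φ hE
  have hcont : Continuous g := hg.monotone.continuous_of_denseRange hdense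
  have hsurj : Function.Surjective g := by
    rw [← range_eq_univ, ← (isCompact_range hcont).isClosed.closure_eq, hdense.closure_range]
  exact ⟨hg.orderIsoOfSurjective g hsurj⟩

end OrderArc

/-- Moore's characterization: a metric continuum with at least two points `a ≠ b` in
which every point other than `a, b` is a cut point is an arc with endpoints `a, b`. -/
theorem stmt10 (J : Type*) [MetricSpace J] [CompactSpace J] [ConnectedSpace J]
    (a b : J) (hab : a ≠ b)
    (hcut : ∀ x : J, x ≠ a → x ≠ b → ¬ IsPreconnected ({x}ᶜ : Set J)) :
    ∃ f : ℝ → J, ContinuousOn f (Icc 0 1) ∧ InjOn f (Icc 0 1) ∧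
      f '' Icc 0 1 = univ ∧ f 0 = a ∧ f 1 = b := by
  obtain ⟨S⟩ := OrientedSplitting.nonempty_of_not_isPreconnected hab hcut
  let := S.linearOrder
  have := S.orderTopology
  have : Nontrivial J := ⟨⟨a, b, hab⟩⟩
  obtain ⟨e⟩ := exists_orderIso_Icc (X := J)
  refine ⟨fun t => e.symm (projIcc 0 1 zero_le_one t),
    e.symm.continuous.comp_continuousOn continuous_projIcc.continuousOn,
    fun s hs t ht hst => ?_, eq_univ_of_forall fun x => ⟨e x, (e x).2, ?_⟩,
    le_antisymm ?_ (S.isBot _), le_antisymm (S.isTop _) ?_⟩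
  · simpa [projIcc_of_mem _ hs, projIcc_of_mem _ ht] using hst
  · simp [projIcc_of_mem _ (e x).2]
  · simp [e.symm_apply_le]
  · simpa [e.le_symm_apply, ← Subtype.coe_le_coe] using (e b).2.2
end

section
/- The relation 'ε-follows' is coarsely transitive with geometric decay: if for each n ≥ 1 the arc J_{n+1} εδ^n-follows J_n, where 0 < δ ≤ 1/10, then for all n and m ≥ 0, the arc J_{n+m} (11/9)εδ^n-follows J_n (via the composition of the coarse maps). -/
/-!
Composing the coarse reparametrizations adds the errors, so `J (n + m)` follows `J n` with
error `ε δⁿ (1 + δ + ⋯ + δ^(m-1)) ≤ (10/9) ε δⁿ`; the remaining `ε δⁿ / 9` is the positive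
slack needed for `m = 0`, since nothing `0`-follows itself.
-/

open Metric Set Filter Topology

namespace Follows

variable {X : Type*} [MetricSpace X]

lemma mono {a b : ℝ} (hab : a ≤ b) {g f : ℝ → X} (h : Follows a g f) : Follows b g f := by
  obtain ⟨p, hp, hp0, hp1, hsub⟩ := h
  exact ⟨p, hp, hp0, hp1, fun s hs t ht => (hsub s hs t ht).trans (thickening_mono hab _)⟩

lemma refl {c : ℝ} (hc : 0 < c) (f : ℝ → X) : Follows c f f :=
  ⟨id, mapsTo_id _, rfl, rfl, fun _ _ _ _ => self_subset_thickening hc _⟩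

lemma trans {a b : ℝ} {f g h : ℝ → X} (hgf : Follows a g f) (hhg : Follows b h g) :
    Follows (a + b) h f := by
  obtain ⟨p, hp, hp0, hp1, hpsub⟩ := hgf
  obtain ⟨q, hq, hq0, hq1, hqsub⟩ := hhg
  refine ⟨p ∘ q, hp.comp hq, by simp [hq0, hp0], by simp [hq1, hp1], fun s hs t ht => ?_⟩
  calc h '' uIcc s t ⊆ thickening b (g '' uIcc (q s) (q t)) := hqsub s hs t ht
    _ ⊆ thickening b (thickening a (f '' uIcc (p (q s)) (p (q t)))) :=
        thickening_subset_of_subset _ (hpsub _ (hq hs) _ (hq ht))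
    _ ⊆ thickening (b + a) (f '' uIcc (p (q s)) (p (q t))) :=
        thickening_thickening_subset _ _ _
    _ = thickening (a + b) (f '' uIcc ((p ∘ q) s) ((p ∘ q) t)) := by rw [add_comm]; rfl

lemma of_chain {c : ℝ} (hc : 0 < c) {a : ℕ → ℝ} {J : ℕ → ℝ → X} {m : ℕ}
    (hJ : ∀ k < m, Follows (a k) (J (k + 1)) (J k)) :
    Follows (c + ∑ k ∈ Finset.range m, a k) (J m) (J 0) := by
  induction m with
  | zero => simpa using refl hc (J 0)
  | succ m ih =>
    rw [Finset.sum_range_succ, ← add_assoc]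
    exact (ih fun k hk => hJ k (hk.trans m.lt_succ_self)).trans (hJ m m.lt_succ_self)

end Follows

lemma geom_sum_le_ten_ninths {δ : ℝ} (hδ : 0 ≤ δ) (hδ' : δ ≤ 1 / 10) (m : ℕ) :
    ∑ k ∈ Finset.range m, δ ^ k ≤ 10 / 9 := by
  have hlt : δ < 1 := by linarith
  calc ∑ k ∈ Finset.range m, δ ^ k = ∑ k ∈ Finset.Ico 0 m, δ ^ k := by rw [Finset.range_eq_Ico]
    _ ≤ δ ^ 0 / (1 - δ) := geom_sum_Ico_le_of_lt_one hδ hlt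
    _ ≤ 10 / 9 := by rw [pow_zero, div_le_iff₀ (by linarith)]; linarith

theorem stmt14_general {X : Type*} [MetricSpace X] (ε δ : ℝ) (hε : 0 < ε) (hδ : 0 < δ)
    (hδ' : δ ≤ 1 / 10) (J : ℕ → ℝ → X)
    (hfol : ∀ n, 1 ≤ n → Follows (ε * δ ^ n) (J (n + 1)) (J n)) :
    ∀ n, 1 ≤ n → ∀ m : ℕ, Follows (11 / 9 * ε * δ ^ n) (J (n + m)) (J n) := by
  intro n hn m
  have hchain : Follows (ε * δ ^ n / 9 + ∑ k ∈ Finset.range m, ε * δ ^ n * δ ^ k)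
      (J (n + m)) (J (n + 0)) :=
    Follows.of_chain (J := fun k => J (n + k)) (by positivity) fun k _ => by
      simpa [pow_add, add_assoc, mul_assoc] using hfol (n + k) (hn.trans (Nat.le_add_right n k))
  refine Follows.mono ?_ hchain
  calc ε * δ ^ n / 9 + ∑ k ∈ Finset.range m, ε * δ ^ n * δ ^ k
      = ε * δ ^ n / 9 + ε * δ ^ n * ∑ k ∈ Finset.range m, δ ^ k := by rw [Finset.mul_sum]
    _ ≤ ε * δ ^ n / 9 + ε * δ ^ n * (10 / 9) := by
        gcongr; exact geom_sum_le_ten_ninths hδ.le hδ' m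
    _ = 11 / 9 * ε * δ ^ n := by ring

/-- Coarse transitivity of `ε`-following with geometric decay: if `J (n+1)`
`εδⁿ`-follows `J n` for all `n ≥ 1` with `0 < δ ≤ 1/10`, then `J (n+m)`
`(11/9)εδⁿ`-follows `J n`. -/
theorem stmt14 {X : Type*} [MetricSpace X] (ε δ : ℝ) (hε : 0 < ε) (hδ : 0 < δ)
    (hδ' : δ ≤ 1 / 10) (J : ℕ → ℝ → X)
    (harc : ∀ n, 1 ≤ n → IsArcParam (J n))
    (hfol : ∀ n, 1 ≤ n → Follows (ε * δ ^ n) (J (n + 1)) (J n)) :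
    ∀ n, 1 ≤ n → ∀ m : ℕ, Follows (11 / 9 * ε * δ ^ n) (J (n + m)) (J n) :=
  stmt14_general ε δ hε hδ hδ' J hfol
end

section
/- Let x_0, ..., x_n be points in a metric space with associated compact sets V_{x_0}, ..., V_{x_n} such that V_{x_i} ∩ V_{x_{i+1}} ≠ ∅ for all i. Define r_0 = 0 and inductively r_j = max{k : V_{x_k} ∩ V_{x_{r_{j-1}}} ≠ ∅} until r_m = n. Then r_j is well-defined and strictly increasing in j, and for all i, j with j ≥ i+2, V_{x_{r_i}} ∩ V_{x_{r_j}} = ∅. -/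
open Metric Set Filter Topology

/-!
Starting from `0`, jump each time to the last index whose set meets the current one.
While the current index is below `n`, the chain condition lets us advance by at least one,
so the jumps reach `n`. If two extracted sets `V (r i)` and `V (r j)` with `j ≥ i + 2` met,
then `r j` would be a candidate for the jump from `r i`, i.e. `r j ≤ r (i + 1) < r j`.
-/

namespace LoopCutting

variable {α : Type*} (V : ℕ → Set α) (n : ℕ)

open Classical in
noncomputable def next (i : ℕ) : ℕ :=
  Nat.findGreatest (fun k => (V k ∩ V i).Nonempty) n

noncomputable def index : ℕ → ℕ
  | 0 => 0
  | j + 1 => next V n (index j)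

variable {V n}

theorem next_le (i : ℕ) : next V n i ≤ n := by
  classical
  exact Nat.findGreatest_le n

theorem le_next {i k : ℕ} (hk : k ≤ n) (h : (V k ∩ V i).Nonempty) : k ≤ next V n i := by
  classical
  exact Nat.le_findGreatest hk h

theorem isGreatest_next {i : ℕ} (hi : i ≤ n) (hne : (V i).Nonempty) :
    IsGreatest {k | k ≤ n ∧ (V k ∩ V i).Nonempty} (next V n i) := by
  classical
  refine ⟨⟨next_le i, ?_⟩, fun k hk => le_next hk.1 hk.2⟩
  obtain ⟨x, hx⟩ := hne
  exact Nat.findGreatest_spec (P := fun k => (V k ∩ V i).Nonempty) hi ⟨x, hx, hx⟩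

theorem lt_next {i : ℕ} (hi : i < n) (hchain : (V i ∩ V (i + 1)).Nonempty) : i < next V n i :=
  le_next hi (by rwa [inter_comm])

theorem index_le (j : ℕ) : index V n j ≤ n := by
  cases j with
  | zero => exact Nat.zero_le n
  | succ j => exact next_le _

theorem exists_index_eq (hchain : ∀ i < n, (V i ∩ V (i + 1)).Nonempty) :
    ∃ j, index V n j = n := by
  by_contra! hne
  have hlt : ∀ j, index V n j < n := fun j => (index_le j).lt_of_ne (hne j)
  have hge : ∀ j, j ≤ index V n j := by
    intro j
    induction j with
    | zero => exact le_rfl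
    | succ j ih => exact ih.trans_lt (lt_next (hlt j) (hchain _ (hlt j)))
  exact (hge n).not_gt (hlt n)

end LoopCutting

theorem stmt18_general {X : Type*} (n : ℕ) (V : ℕ → Set X)
    (hchain : ∀ i < n, (V i ∩ V (i + 1)).Nonempty) :
    ∃ (m : ℕ) (r : ℕ → ℕ), r 0 = 0 ∧ r m = n ∧ StrictMonoOn r (Iic m) ∧
      (∀ j, 1 ≤ j → j ≤ m →
        IsGreatest {k | k ≤ n ∧ (V k ∩ V (r (j - 1))).Nonempty} (r j)) ∧
      ∀ i j, j ≤ m → i + 2 ≤ j → V (r i) ∩ V (r j) = ∅ := by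
  have hreach := LoopCutting.exists_index_eq hchain
  let r := LoopCutting.index V n
  let m := Nat.find hreach
  have hlt : ∀ j < m, r j < n := fun j hj =>
    (LoopCutting.index_le j).lt_of_ne (Nat.find_min hreach hj)
  have hmono : StrictMonoOn r (Iic m) := strictMonoOn_Iic_of_lt_succ fun j hj =>
    LoopCutting.lt_next (hlt j hj) (hchain _ (hlt j hj))
  refine ⟨m, r, rfl, Nat.find_spec hreach, hmono, ?_, ?_⟩
  · intro j hj1 hjm
    obtain ⟨j, rfl⟩ := Nat.exists_eq_add_of_le' hj1
    have hj := hlt j (by omega)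
    exact LoopCutting.isGreatest_next hj.le ((hchain _ hj).mono inter_subset_left)
  · intro i j hjm hij
    by_contra hmeet
    have hle : r j ≤ r (i + 1) :=
      LoopCutting.le_next (LoopCutting.index_le j) (by rwa [inter_comm, nonempty_iff_ne_empty])
    exact (hmono (by simp only [mem_Iic]; omega) (mem_Iic.2 hjm) (by omega)).not_ge hle

/-- Loop-cutting subsequence extraction: from a chain of sets with nonempty
consecutive intersections, one extracts a strictly increasing index sequence
`r 0 = 0, …, r m = n`, each `r j` being the greatest index whose set meets
`V (r (j-1))`, such that non-consecutive extracted sets are disjoint. -/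
theorem stmt18 {X : Type*} [MetricSpace X] (n : ℕ) (V : ℕ → Set X)
    (hcpt : ∀ i ≤ n, IsCompact (V i))
    (hchain : ∀ i < n, (V i ∩ V (i + 1)).Nonempty) :
    ∃ (m : ℕ) (r : ℕ → ℕ), r 0 = 0 ∧ r m = n ∧ StrictMonoOn r (Iic m) ∧
      (∀ j, 1 ≤ j → j ≤ m →
        IsGreatest {k | k ≤ n ∧ (V k ∩ V (r (j - 1))).Nonempty} (r j)) ∧
      ∀ i j, j ≤ m → i + 2 ≤ j → V (r i) ∩ V (r j) = ∅ :=
  stmt18_general n V hchain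
end
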